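/- arXiv:2210.03553 — 3 statements merged into one kernel-verified Lean document; each statement's English description precedes it below -/
import Mathlib

section
/- Let I be a model of a normal program Π and φ an ordering over I (an injective-on-levels function φ: I → {0,...,|I|−1}). If every atom a ∈ I is proven—i.e., there is a rule r ∈ Π with a ∈ H_r, B_r⁺ ⊆ I, I ∩ B_r⁻ = ∅, I ∩ (H_r \ {a}) = ∅, and φ(b) < φ(a) for all b ∈ B_r⁺—then I is a minimal model of the Gelfond–Lifschitz reduct Π^I, i.e., an answer set of Π. -/
/-- A rule `H ← B⁺, ¬B⁻` with head `H`, positive body `B⁺` and negative body `B⁻`. -/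
structure Rule (α : Type*) where
  head : Finset α
  pos : Finset α
  neg : Finset α

/-- An interpretation `I` satisfies a rule `r` iff `(H_r ∪ B_r⁻) ∩ I ≠ ∅` or
`B_r⁺ \ I ≠ ∅`. -/
def satisfiesRule {α : Type*} [DecidableEq α] (I : Finset α) (r : Rule α) : Prop :=
  ((r.head ∪ r.neg) ∩ I).Nonempty ∨ (r.pos \ I).Nonempty

/-- `I` is a model of the program `P` if it satisfies all of its rules. -/
def isModel {α : Type*} [DecidableEq α] (P : Set (Rule α)) (I : Finset α) : Prop :=
  ∀ r ∈ P, satisfiesRule I r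

/-- The Gelfond–Lifschitz reduct `P^I`: drop rules whose negative body meets `I`,
and remove the negative bodies of the remaining rules. -/
def reduct {α : Type*} [DecidableEq α] (P : Set (Rule α)) (I : Finset α) :
    Set (Rule α) :=
  {r' | ∃ r ∈ P, r.neg ∩ I = ∅ ∧ r' = ⟨r.head, r.pos, ∅⟩}

/-- `I` is an answer set of `P`: a subset-minimal model of the reduct `P^I`. -/
def isAnswerSet {α : Type*} [DecidableEq α] (P : Set (Rule α)) (I : Finset α) : Prop :=
  isModel (reduct P I) I ∧ ∀ J : Finset α, J ⊆ I → isModel (reduct P I) J → J = I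

/-- If `I` is a model of a normal program `P`, `φ` is an ordering over `I`, and every
atom of `I` is proven by some rule with respect to `φ`, then `I` is an answer set. -/
theorem answerSet_of_proven {α : Type*} [DecidableEq α]
    (P : Set (Rule α)) (hnormal : ∀ r ∈ P, r.head.card ≤ 1)
    (I : Finset α) (hmodel : isModel P I)
    (φ : α → ℕ) (hφ : ∀ a ∈ I, φ a < I.card)
    (hproven : ∀ a ∈ I, ∃ r ∈ P, a ∈ r.head ∧ r.pos ⊆ I ∧ I ∩ r.neg = ∅ ∧
      I ∩ (r.head \ {a}) = ∅ ∧ ∀ b ∈ r.pos, φ b < φ a) :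
    isAnswerSet P I := by
  constructor
  · rintro r' ⟨r, hrP, hneg, rfl⟩
    rcases hmodel r hrP with h | h
    · rcases h with ⟨c, hc⟩
      simp only [Finset.mem_inter, Finset.mem_union] at hc
      rcases hc.1 with hh | hn
      · exact Or.inl ⟨c, Finset.mem_inter.mpr ⟨Finset.mem_union_left _ hh, hc.2⟩⟩
      · exact absurd (Finset.mem_inter.mpr ⟨hn, hc.2⟩) (by simp [hneg])
    · exact Or.inr h
  · intro J hJI hJ
    have key : ∀ n : ℕ, ∀ a ∈ I, φ a = n → a ∈ J := by
      intro n
      induction n using Nat.strong_induction_on with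
      | _ n ih =>
        intro a haI hφa
        obtain ⟨r, hrP, hhead, hpos, hIneg, hmin, hlt⟩ := hproven a haI
        have hposJ : r.pos ⊆ J := by
          intro b hb
          exact ih (φ b) (hφa ▸ hlt b hb) b (hpos hb) rfl
        have hr' : (⟨r.head, r.pos, ∅⟩ : Rule α) ∈ reduct P I :=
          ⟨r, hrP, by rw [Finset.inter_comm]; exact hIneg, rfl⟩
        rcases hJ _ hr' with h | h
        · rcases h with ⟨c, hc⟩
          simp only [Finset.mem_inter, Finset.mem_union, Finset.union_empty] at hc
          have hcI : c ∈ I := hJI hc.2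
          by_cases hca : c = a
          · exact hca ▸ hc.2
          · have hmem : c ∈ I ∩ (r.head \ {a}) :=
              Finset.mem_inter.mpr ⟨hcI, Finset.mem_sdiff.mpr ⟨hc.1, by
                simp only [Finset.mem_singleton]; exact hca⟩⟩
            rw [hmin] at hmem
            exact absurd hmem (Finset.notMem_empty c)
        · rcases h with ⟨c, hc⟩
          simp only [Finset.mem_sdiff] at hc
          exact absurd (hposJ hc.1) hc.2
    refine Finset.Subset.antisymm hJI (fun a haI => key (φ a) a haI rfl)
end

section
/- The program Π' = { a ∨ b ←; a ← b; b ← a } has exactly one answer set, namely {a,b}, yet no ordering φ on {a,b} together with a choice of 'proving' rules can prove both a and b: the disjunctive rule can prove at most one of the two atoms, since it requires the other to be absent, and proving both atoms with the remaining rules requires φ(a) < φ(b) and φ(b) < φ(a) simultaneously, which is impossible. -/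
/-- The program `Π' = { a ∨ b ← ;  a ← b ;  b ← a }` has exactly one answer set,
namely `{a,b}`, yet there is no ordering `φ` together with a choice of suitable
proving rules that proves both `a` and `b`. -/
theorem disjunctive_cycle_not_provable {α : Type*} [DecidableEq α]
    (a b : α) (hab : a ≠ b) :
    (∀ I : Finset α,
        isAnswerSet ({⟨{a, b}, ∅, ∅⟩, ⟨{a}, {b}, ∅⟩, ⟨{b}, {a}, ∅⟩} : Set (Rule α)) I ↔
          I = {a, b}) ∧
    ¬ ∃ φ : α → ℕ, ∀ x ∈ ({a, b} : Finset α),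
        ∃ r ∈ ({⟨{a, b}, ∅, ∅⟩, ⟨{a}, {b}, ∅⟩, ⟨{b}, {a}, ∅⟩} : Set (Rule α)),
          x ∈ r.head ∧ r.pos ⊆ ({a, b} : Finset α) ∧
          ({a, b} : Finset α) ∩ r.neg = ∅ ∧
          ({a, b} : Finset α) ∩ (r.head \ {x}) = ∅ ∧
          ∀ y ∈ r.pos, φ y < φ x := by
  constructor
  · intro I
    have hred : ∀ J : Finset α,
        reduct ({⟨{a, b}, ∅, ∅⟩, ⟨{a}, {b}, ∅⟩, ⟨{b}, {a}, ∅⟩} : Set (Rule α)) J =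
        ({⟨{a, b}, ∅, ∅⟩, ⟨{a}, {b}, ∅⟩, ⟨{b}, {a}, ∅⟩} : Set (Rule α)) := by
      intro J
      ext r'
      constructor
      · rintro ⟨r, hr, -, rfl⟩
        rcases hr with rfl | rfl | rfl <;> simp_all [Set.mem_insert_iff]
      · intro hr
        rcases hr with rfl | rfl | rfl
        · exact ⟨_, by left; rfl, by simp, rfl⟩
        · exact ⟨_, by right; left; rfl, by simp, rfl⟩
        · exact ⟨_, by right; right; rfl, by simp, rfl⟩
    have hmodel : ∀ J : Finset α,
        isModel ({⟨{a, b}, ∅, ∅⟩, ⟨{a}, {b}, ∅⟩, ⟨{b}, {a}, ∅⟩} : Set (Rule α)) J ↔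
        (a ∈ J ∧ b ∈ J) := by
      intro J
      constructor
      · intro h
        have h1 := h ⟨{a, b}, ∅, ∅⟩ (by left; rfl)
        have h2 := h ⟨{a}, {b}, ∅⟩ (by right; left; rfl)
        have h3 := h ⟨{b}, {a}, ∅⟩ (by right; right; rfl)
        simp [satisfiesRule, Finset.Nonempty, Finset.mem_inter, Finset.mem_sdiff] at h1 h2 h3
        by_cases ha : a ∈ J <;> by_cases hb : b ∈ J <;> tauto
      · rintro ⟨ha, hb⟩
        rintro r (rfl | rfl | rfl) <;>
          simp [satisfiesRule, Finset.Nonempty, Finset.mem_inter, Finset.mem_sdiff] <;> tauto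
    have hsub : ∀ J : Finset α, a ∈ J → b ∈ J → ({a, b} : Finset α) ⊆ J := by
      intro J ha hb x hx
      rcases Finset.mem_insert.mp hx with rfl | hx
      · exact ha
      · rcases Finset.mem_singleton.mp hx with rfl; exact hb
    constructor
    · rintro ⟨hmod, hmin⟩
      rw [hred] at hmod hmin
      obtain ⟨ha, hb⟩ := (hmodel I).mp hmod
      exact ((hmin {a, b} (hsub I ha hb) ((hmodel _).mpr ⟨by simp, by simp⟩))).symm
    · rintro rfl
      refine ⟨by rw [hred]; exact (hmodel _).mpr ⟨by simp, by simp⟩, ?_⟩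
      intro J hJ hJmod
      rw [hred] at hJmod
      obtain ⟨ha, hb⟩ := (hmodel J).mp hJmod
      exact Finset.Subset.antisymm hJ (hsub J ha hb)
  · rintro ⟨φ, h⟩
    have key : ∀ x y : α, x ∈ ({a, b} : Finset α) → y ∈ ({a, b} : Finset α) → x ≠ y →
        φ y < φ x := by
      intro x y hx hy hxy
      obtain ⟨r, hr, hhead, hpos, hneg, hdisj, hlt⟩ := h x hx
      rcases hr with rfl | rfl | rfl
      · -- disjunctive rule: y ∈ {a,b} ∩ (head \ {x}), contradicting hdisj
        exfalso
        have hy' : y ∈ ({a, b} : Finset α) ∩ (({a, b} : Finset α) \ {x}) := by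
          simp only [Finset.mem_inter, Finset.mem_sdiff, Finset.mem_singleton]
          exact ⟨hy, hy, fun h' => hxy h'.symm⟩
        rw [hdisj] at hy'
        exact absurd hy' (Finset.notMem_empty y)
      · -- rule a ← b : head = {a}, so x = a, hence y = b
        have hx' : x = a := Finset.mem_singleton.mp hhead
        have hy' : y = b := by
          rcases Finset.mem_insert.mp hy with h' | h'
          · exact absurd (hx'.trans h'.symm) hxy
          · exact Finset.mem_singleton.mp h'
        rw [hy']
        exact hlt b (Finset.mem_singleton_self b)
      · -- rule b ← a : head = {b}, so x = b, hence y = a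
        have hx' : x = b := Finset.mem_singleton.mp hhead
        have hy' : y = a := by
          rcases Finset.mem_insert.mp hy with h' | h'
          · exact h'
          · exact absurd (hx'.trans (Finset.mem_singleton.mp h').symm) hxy
        rw [hy']
        exact hlt a (Finset.mem_singleton_self a)
    have h1 := key a b (by simp) (by simp) hab
    have h2 := key b a (by simp) (by simp) hab.symm
    omega
end

section
/- Transitive closure preservation along a tree decomposition: Let (T,χ) be a tree decomposition of graph G_Π, and for each node t let F_t be the set of Horn clauses (x≺y) ∧ (y≺z) → (x≺z) for all distinct x,y,z ∈ χ(t). For a node t let F_{≤t} be the union of F_{t'} over all t' in the subtree of t together with F_t, and χ_{≤t} the union of the corresponding bags. Then for any model M of F_{≤t}: whenever there is a path x, p₁, ..., p_o, y in G_Π with all intermediate vertices p₁,...,p_o in χ_{≤t}, with x,y ∈ χ(t), and with (x≺p₁), (p₁≺p₂), ..., (p_o≺y) all in M, then (x≺y) ∈ M. -/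
/-- A tree decomposition of a graph `G` over an index graph `T`. -/
structure TreeDecomp {V : Type*} {ι : Type*} [DecidableEq V]
    (G : SimpleGraph V) (T : SimpleGraph ι) where
  bag : ι → Finset V
  isTree : T.IsTree
  vertexCover : ∀ v : V, ∃ t : ι, v ∈ bag t
  edgeCover : ∀ ⦃u v : V⦄, G.Adj u v → ∃ t : ι, u ∈ bag t ∧ v ∈ bag t
  connect : ∀ (v : V) (t₁ t₂ : ι) (p : T.Walk t₁ t₂), p.IsPath →
    v ∈ bag t₁ → v ∈ bag t₂ → ∀ t ∈ p.support, v ∈ bag t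

/-- With the tree rooted at `r`, node `s` lies in the subtree rooted at `t`. -/
def inSubtree {ι : Type*} (T : SimpleGraph ι) (r t s : ι) : Prop :=
  ∀ p : T.Walk r s, p.IsPath → t ∈ p.support

/-- `χ_{≤ t}`: union of all bags in the subtree rooted at `t`. -/
def chiLe {V : Type*} {ι : Type*} [DecidableEq V] (G : SimpleGraph V)
    (T : SimpleGraph ι) (D : TreeDecomp G T) (r t : ι) : Set V :=
  {v | ∃ s : ι, inSubtree T r t s ∧ v ∈ D.bag s}


/-!
Cover the `i`-th edge of the path by a bag `sᵢ` of the subtree of `t`: a bag outside that subtree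
meets `χ_{≤t}` only inside `χ(t)`, so such a bag exists. Then induct on `∑ᵢ (dist(u, sᵢ) + 1)`
over nodes `u` of the subtree with both ends of the chain in `χ(u)`, starting from `u = t`. If an
interior vertex of the chain lies in `χ(u)`, split the chain there and join the two halves with the
transitivity clause of `u`. Otherwise consecutive bags share a vertex outside `χ(u)`, so all bags
lie beyond the same neighbour `c` of `u`, both ends lie in `χ(c)`, and `u` can be replaced by `c`,
which lowers every `dist(u, sᵢ)`.
-/

open SimpleGraph

section Tree

variable {ι : Type*} {T : SimpleGraph ι}

theorem inSubtree_self (T : SimpleGraph ι) (r t : ι) : inSubtree T r t t :=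
  fun p _ ↦ p.end_mem_support

theorem inSubtree.mem_support {a b c : ι} (h : inSubtree T a b c) (p : T.Walk a c) :
    b ∈ p.support := by
  classical
  exact p.support_bypass_subset_support (h _ p.bypass_isPath)

theorem inSubtree_of_mem_support (hT : T.IsAcyclic) {a b c : ι} {p : T.Walk a c}
    (hp : p.IsPath) (hb : b ∈ p.support) : inSubtree T a b c := fun q hq ↦ by
  rwa [Subtype.mk.inj (hT.subsingleton_path a c |>.elim ⟨q, hq⟩ ⟨p, hp⟩)]

theorem exists_adj_inSubtree (hT : T.IsTree) {u s : ι} (hus : u ≠ s) :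
    ∃ c, T.Adj u c ∧ inSubtree T u c s := by
  obtain ⟨p, hp⟩ := hT.connected.exists_isPath u s
  cases p with
  | nil => exact absurd rfl hus
  | @cons _ c _ hc q => exact ⟨c, hc, inSubtree_of_mem_support hT.isAcyclic hp (by simp)⟩

theorem dist_lt_of_inSubtree (hT : T.Connected) {u c s : ι} (hcu : c ≠ u)
    (h : inSubtree T u c s) : T.dist c s < T.dist u s := by
  classical
  obtain ⟨p, hp, hlen⟩ := hT.exists_path_of_dist u s
  have hc := h p hp
  calc T.dist c s ≤ (p.dropUntil c hc).length := dist_le _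
    _ < p.length := Walk.length_dropUntil_lt_length hc hcu
    _ = T.dist u s := hlen

theorem notMem_support_of_inSubtree (hT : T.IsTree) {u c s : ι} (hc : T.Adj u c)
    (h : inSubtree T u c s) {q : T.Walk c s} (hq : q.IsPath) : u ∉ q.support := by
  obtain ⟨p, hp⟩ := hT.connected.exists_isPath u s
  simpa using hT.isAcyclic.ne_mem_support_of_support_of_adj_of_isPath hp.reverse hq.reverse hc
    (by simpa using h p hp)

theorem inSubtree_of_adj_of_not_inSubtree (hT : T.IsTree) {u c s s' : ι} (hc : T.Adj u c)
    (hs : inSubtree T u c s) (hs' : ¬ inSubtree T u c s') : inSubtree T s' u s := by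
  classical
  intro p _
  obtain ⟨q, hq, hcq⟩ : ∃ q : T.Walk u s', q.IsPath ∧ c ∉ q.support := by
    simpa [inSubtree] using hs'
  obtain ⟨q', hq'⟩ := hT.connected.exists_isPath s c
  have hu : u ∈ (p.append q').bypass.support := by
    by_contra hu
    have := hT.isAcyclic.mem_support_of_ne_mem_support_of_adj_of_isPath
      hq.reverse (p.append q').bypass_isPath hc hu
    exact hcq (by simpa using this)
  rcases Walk.mem_support_append_iff _ _ |>.mp (Walk.support_bypass_subset_support _ hu) with h | h
  · exact h
  · exact absurd (by simpa using h) (notMem_support_of_inSubtree hT hc hs hq'.reverse)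

theorem inSubtree_of_not_inSubtree {r t s s' : ι} (hs' : inSubtree T r t s')
    (hs : ¬ inSubtree T r t s) : inSubtree T s' t s := by
  intro p _
  obtain ⟨q, -, htq⟩ : ∃ q : T.Walk r s, q.IsPath ∧ t ∉ q.support := by
    simpa [inSubtree] using hs
  simpa [htq] using hs'.mem_support (q.append p.reverse)

theorem inSubtree_of_adj_of_inSubtree (hT : T.IsTree) {r t u c s : ι}
    (hu : inSubtree T r t u) (hs : inSubtree T r t s) (hc : T.Adj u c)
    (hcs : inSubtree T u c s) : inSubtree T r t c := by
  by_contra hct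
  obtain ⟨p, -, htp⟩ : ∃ p : T.Walk r c, p.IsPath ∧ t ∉ p.support := by
    simpa [inSubtree] using hct
  have htu : t = u := by simpa [htp] using hu.mem_support (p.concat hc.symm)
  obtain ⟨q, hq⟩ := hT.connected.exists_isPath c s
  have htq : t ∈ q.support := by simpa [htp] using hs.mem_support (p.append q)
  exact notMem_support_of_inSubtree hT hc hcs hq (htu ▸ htq)

end Tree

section Decomp

variable {V ι : Type*} [DecidableEq V] {G : SimpleGraph V} {T : SimpleGraph ι}

theorem TreeDecomp.mem_bag_of_inSubtree (D : TreeDecomp G T) {a b c : ι} {v : V}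
    (h : inSubtree T a b c) (ha : v ∈ D.bag a) (hc : v ∈ D.bag c) : v ∈ D.bag b := by
  obtain ⟨p, hp⟩ := D.isTree.connected.exists_isPath a c
  exact D.connect v a c p hp ha hc b (h p hp)

theorem TreeDecomp.exists_inSubtree_of_adj (D : TreeDecomp G T) {r t : ι} {u v : V}
    (hu : u ∈ chiLe G T D r t) (hv : v ∈ chiLe G T D r t) (huv : G.Adj u v) :
    ∃ s, inSubtree T r t s ∧ u ∈ D.bag s ∧ v ∈ D.bag s := by
  obtain ⟨s, hus, hvs⟩ := D.edgeCover huv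
  by_cases hs : inSubtree T r t s
  · exact ⟨s, hs, hus, hvs⟩
  obtain ⟨su, hsu, hu⟩ := hu
  obtain ⟨sv, hsv, hv⟩ := hv
  exact ⟨t, inSubtree_self T r t, D.mem_bag_of_inSubtree (inSubtree_of_not_inSubtree hsu hs) hu hus,
    D.mem_bag_of_inSubtree (inSubtree_of_not_inSubtree hsv hs) hv hvs⟩

end Decomp

section BagChain

variable {V ι : Type*}

def BagChain (bag : ι → Finset V) (M : V → V → Prop) : V → List (ι × V) → V → Prop
  | a, [], b => a = b
  | a, (s, v) :: L, b => a ∈ bag s ∧ v ∈ bag s ∧ M a v ∧ BagChain bag M v L b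

theorem BagChain.exists_mem_bag_end {bag : ι → Finset V} {M : V → V → Prop} :
    ∀ {a b : V} {L : List (ι × V)}, BagChain bag M a L b → L ≠ [] →
      ∃ s, (s, b) ∈ L ∧ b ∈ bag s
  | _, _, [], _, h => absurd rfl h
  | _, _, [(s, v)], ⟨_, hv, _, rfl⟩, _ => ⟨s, by simp, hv⟩
  | _, _, (_, _) :: e :: L, ⟨_, _, _, h⟩, _ => by
    obtain ⟨s, hs, hb⟩ := h.exists_mem_bag_end (List.cons_ne_nil e L)
    exact ⟨s, List.mem_cons_of_mem _ hs, hb⟩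

theorem BagChain.nodup_of_append {bag : ι → Finset V} {M : V → V → Prop} {x m y : V}
    {A B : List (ι × V)} (hAm : BagChain bag M x A m) (hmB : BagChain bag M m B y)
    (hA : A ≠ []) (hB : B ≠ []) (hnd : (x :: (A ++ B).map Prod.snd).Nodup) :
    (x :: A.map Prod.snd).Nodup ∧ (m :: B.map Prod.snd).Nodup ∧ x ≠ m ∧ m ≠ y ∧ x ≠ y := by
  obtain ⟨_, hmA, -⟩ := hAm.exists_mem_bag_end hA
  obtain ⟨_, hyB, -⟩ := hmB.exists_mem_bag_end hB
  replace hmA : m ∈ A.map Prod.snd := List.mem_map_of_mem (f := Prod.snd) hmA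
  replace hyB : y ∈ B.map Prod.snd := List.mem_map_of_mem (f := Prod.snd) hyB
  rw [List.map_append, List.nodup_cons, List.mem_append, not_or, List.nodup_append] at hnd
  obtain ⟨⟨hxA, hxB⟩, hndA, hndB, hAB⟩ := hnd
  have hmB : m ∉ B.map Prod.snd := fun h ↦ hAB m hmA m h rfl
  exact ⟨List.nodup_cons.mpr ⟨hxA, hndA⟩, List.nodup_cons.mpr ⟨hmB, hndB⟩,
    fun h ↦ hxA (h ▸ hmA), fun h ↦ hmB (h ▸ hyB), fun h ↦ hxB (h ▸ hyB)⟩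

/-- The `+ 1` makes the weight drop when a chain is split. -/
noncomputable def chainWeight (T : SimpleGraph ι) (u : ι) (L : List (ι × V)) : ℕ :=
  (L.map fun e ↦ T.dist u e.1 + 1).sum

@[simp]
theorem chainWeight_append (T : SimpleGraph ι) (u : ι) (A B : List (ι × V)) :
    chainWeight T u (A ++ B) = chainWeight T u A + chainWeight T u B := by
  simp [chainWeight]

theorem chainWeight_pos {T : SimpleGraph ι} {u : ι} {L : List (ι × V)} (hL : L ≠ []) :
    0 < chainWeight T u L := by
  obtain ⟨e, L, rfl⟩ := List.exists_cons_of_ne_nil hL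
  simp [chainWeight]

theorem chainWeight_lt {T : SimpleGraph ι} {u c : ι} {L : List (ι × V)} (hL : L ≠ [])
    (h : ∀ e ∈ L, T.dist c e.1 < T.dist u e.1) : chainWeight T c L < chainWeight T u L := by
  obtain ⟨e, he⟩ := List.exists_mem_of_ne_nil L hL
  exact List.sum_lt_sum _ _ (fun e he ↦ by simpa using (h e he).le) ⟨e, he, by simpa using h e he⟩

end BagChain

section Main

variable {V ι : Type*} [DecidableEq V] {G : SimpleGraph V} {T : SimpleGraph ι}

theorem TreeDecomp.inSubtree_or_exists_split (D : TreeDecomp G T) {M : V → V → Prop}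
    {u c : ι} (hc : T.Adj u c) {L : List (ι × V)} :
    ∀ {a b v : V} {s : ι}, BagChain D.bag M a ((s, v) :: L) b → inSubtree T u c s →
      (∀ e ∈ (s, v) :: L, inSubtree T u c e.1) ∨
      ∃ A B m, (s, v) :: L = A ++ B ∧ A ≠ [] ∧ B ≠ [] ∧ m ∈ D.bag u ∧
        BagChain D.bag M a A m ∧ BagChain D.bag M m B b := by
  induction L with
  | nil => intro _ _ _ _ _ hs; simp [hs]
  | cons e L ih =>
    obtain ⟨s', v'⟩ := e
    intro a b v s hL hs
    obtain ⟨has, hvs, hav, hrest⟩ := hL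
    by_cases hvu : v ∈ D.bag u
    · exact .inr ⟨[(s, v)], _, v, rfl, by simp, by simp, hvu, ⟨has, hvs, hav, rfl⟩, hrest⟩
    have hs' : inSubtree T u c s' := by
      by_contra hs'
      exact hvu (D.mem_bag_of_inSubtree (inSubtree_of_adj_of_not_inSubtree D.isTree hc hs hs')
        hrest.1 hvs)
    rcases ih hrest hs' with hall | ⟨A, B, m, hAB, hA, hB, hm, hAm, hmB⟩
    · exact .inl (List.forall_mem_cons.mpr ⟨hs, hall⟩)
    · exact .inr ⟨(s, v) :: A, B, m, by simp [hAB], by simp, hB, hm, ⟨has, hvs, hav, hAm⟩, hmB⟩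

theorem TreeDecomp.rel_of_bagChain (D : TreeDecomp G T) {r t : ι} {M : V → V → Prop}
    (hM : ∀ s : ι, inSubtree T r t s → ∀ x y z : V,
      x ∈ D.bag s → y ∈ D.bag s → z ∈ D.bag s →
      x ≠ y → y ≠ z → x ≠ z → M x y → M y z → M x z)
    {u : ι} {x y : V} {L : List (ι × V)} (hu : inSubtree T r t u) (hx : x ∈ D.bag u)
    (hy : y ∈ D.bag u) (hL : BagChain D.bag M x L y) (hbags : ∀ e ∈ L, inSubtree T r t e.1)
    (hnd : (x :: L.map Prod.snd).Nodup) (hne : L ≠ []) : M x y := by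
  induction hw : chainWeight T u L using Nat.strong_induction_on generalizing u x y L with
  | _ n ih =>
  have split : ∀ A B m, L = A ++ B → A ≠ [] → B ≠ [] → m ∈ D.bag u →
      BagChain D.bag M x A m → BagChain D.bag M m B y → M x y := by
    rintro A B m rfl hA hB hm hAm hmB
    obtain ⟨hndA, hndB, hxm, hmy, hxy⟩ := hAm.nodup_of_append hmB hA hB hnd
    have hwA : chainWeight T u A < n := by simp [← hw, chainWeight_pos hB]
    have hwB : chainWeight T u B < n := by simp [← hw, chainWeight_pos hA]
    exact hM u hu x m y hx hm hy hxm hmy hxy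
      (ih _ hwA hu hx hm hAm (fun e he ↦ hbags e (List.mem_append_left _ he)) hndA hA rfl)
      (ih _ hwB hu hm hy hmB (fun e he ↦ hbags e (List.mem_append_right _ he)) hndB hB rfl)
  obtain ⟨⟨s, v⟩, L', rfl⟩ := List.exists_cons_of_ne_nil hne
  obtain ⟨hxs, hvs, hxv, hvL'⟩ := id hL
  rcases L' with _ | ⟨e, L'⟩
  · exact hvL' ▸ hxv
  by_cases hsu : s = u
  · exact split [(s, v)] (e :: L') v rfl (by simp) (by simp) (hsu ▸ hvs) ⟨hxs, hvs, hxv, rfl⟩ hvL'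
  obtain ⟨c, hc, hcs⟩ := exists_adj_inSubtree D.isTree (Ne.symm hsu)
  rcases D.inSubtree_or_exists_split hc hL hcs with hall | ⟨A, B, m, hAB, hA, hB, hm, hAm, hmB⟩
  · obtain ⟨sy, hsy, hysy⟩ := hL.exists_mem_bag_end (by simp)
    have hct : inSubtree T r t c :=
      inSubtree_of_adj_of_inSubtree D.isTree hu (hbags _ List.mem_cons_self) hc hcs
    have hw' : chainWeight T c ((s, v) :: e :: L') < n := hw ▸ chainWeight_lt (by simp)
      fun e he ↦ dist_lt_of_inSubtree D.isTree.connected hc.ne.symm (hall e he)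
    exact ih _ hw' hct (D.mem_bag_of_inSubtree hcs hx hxs)
      (D.mem_bag_of_inSubtree (hall _ hsy) hy hysy) hL hbags hnd hne rfl
  · exact split A B m hAB hA hB hm hAm hmB

theorem TreeDecomp.exists_bagChain (D : TreeDecomp G T) {r t : ι} {M : V → V → Prop} {y : V}
    (hy : y ∈ chiLe G T D r t) {l : List V} :
    ∀ {x : V}, x ∈ chiLe G T D r t → (∀ p ∈ l, p ∈ chiLe G T D r t) →
      (x :: (l ++ [y])).IsChain G.Adj → (x :: (l ++ [y])).IsChain M →
      ∃ L, BagChain D.bag M x L y ∧ (∀ e ∈ L, inSubtree T r t e.1) ∧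
        L.map Prod.snd = l ++ [y] := by
  induction l with
  | nil =>
    intro x hx _ hadj hM
    rw [List.nil_append, List.isChain_pair] at hadj hM
    obtain ⟨s, hs, hxs, hys⟩ := D.exists_inSubtree_of_adj hx hy hadj
    exact ⟨[(s, y)], ⟨hxs, hys, hM, rfl⟩, by simpa using hs, rfl⟩
  | cons p l ih =>
    intro x hx hl hadj hM
    rw [List.cons_append, List.isChain_cons_cons] at hadj hM
    have hp := hl p List.mem_cons_self
    obtain ⟨s, hs, hxs, hps⟩ := D.exists_inSubtree_of_adj hx hp hadj.1
    obtain ⟨L, hL, hbags, hmap⟩ := ih hp (fun q hq ↦ hl q (List.mem_cons_of_mem p hq)) hadj.2 hM.2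
    exact ⟨(s, p) :: L, ⟨hxs, hps, hM.1, hL⟩, List.forall_mem_cons.mpr ⟨hs, hbags⟩,
      by simp [hmap]⟩

end Main

/-- Transitive closure preservation along a tree decomposition: if the model `M`
satisfies the bagwise transitivity clauses at every node of the subtree rooted
at `t`, then for any path `x, p₁, …, p_o, y` of `G` with `x, y ∈ χ(t)`, all
intermediate vertices inside `χ_{≤t}`, and all consecutive `≺`-facts in `M`,
the fact `x ≺ y` is also in `M`. -/
theorem transitive_closure_along_treeDecomp
    {V : Type*} {ι : Type*} [DecidableEq V]
    (G : SimpleGraph V) (T : SimpleGraph ι) (D : TreeDecomp G T)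
    (r t : ι) (M : V → V → Prop)
    (hM : ∀ s : ι, inSubtree T r t s → ∀ x y z : V,
      x ∈ D.bag s → y ∈ D.bag s → z ∈ D.bag s →
      x ≠ y → y ≠ z → x ≠ z → M x y → M y z → M x z)
    (x y : V) (hx : x ∈ D.bag t) (hy : y ∈ D.bag t)
    (l : List V) (hmem : ∀ p ∈ l, p ∈ chiLe G T D r t)
    (hnodup : (x :: (l ++ [y])).Nodup)
    (hadj : List.Chain' G.Adj (x :: (l ++ [y])))
    (hM' : List.Chain' M (x :: (l ++ [y]))) :
    M x y := by
  have htt := inSubtree_self T r t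
  obtain ⟨L, hL, hbags, hmap⟩ :=
    D.exists_bagChain ⟨t, htt, hy⟩ ⟨t, htt, hx⟩ hmem hadj hM'
  refine D.rel_of_bagChain hM htt hx hy hL hbags (hmap ▸ hnodup) ?_
  rintro rfl
  simp at hmap
end
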